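/- arXiv:2602.14061 — 2 statements merged into one kernel-verified Lean document; each statement's English description precedes it below -/
import Mathlib

section
/- Consider the one-dimensional harmonic oscillator $U(q) = \frac{1}{2}q^2$, $M = 1$, and the MPL step with $\alpha = 1 + \alpha_2 h^2$, $\beta = 1 + \beta_2 h^2$: $q_1 = \beta q + h(\alpha p - \frac{h}{2}q)$, $p_1 = \alpha^2 p - \frac{h}{2}(\alpha q + q_1)$. Define $H(q,p) = \frac{1}{2}(q^2 + p^2)$. Then $H(q_1, p_1) - H(q, p) = h^2(\beta_2 q^2 + 2\alpha_2 p^2) + R(h)$ where $|R(h)| \leq C h^3$ for $0 < h \leq 1$ and a constant $C$ depending only on $|q|, |p|, |\alpha_2|, |\beta_2|$. -/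
private lemma horner_abs (h x y B : ℝ) (h0 : 0 ≤ h) (h1 : h ≤ 1) (hy : |y| ≤ B) :
    |x + h * y| ≤ |x| + B := by
  refine (abs_add_le _ _).trans ?_
  rw [abs_mul, abs_of_nonneg h0]
  nlinarith [abs_nonneg y, abs_nonneg x]

/-- explicit 1D energy drift for the MPL step on the harmonic
oscillator `U(q) = q²/2`: `ΔH = h²(β₂q² + 2α₂p²) + O(h³)`. -/
theorem stmt_10 (q p α₂ β₂ : ℝ) :
    ∃ C : ℝ, ∀ h : ℝ, 0 < h → h ≤ 1 →
      let q₁ := (1 + β₂ * h ^ 2) * q + h * ((1 + α₂ * h ^ 2) * p - (h / 2) * q)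
      let p₁ := (1 + α₂ * h ^ 2) ^ 2 * p - (h / 2) * ((1 + α₂ * h ^ 2) * q + q₁)
      |(q₁ ^ 2 + p₁ ^ 2) / 2 - (q ^ 2 + p ^ 2) / 2
        - h ^ 2 * (β₂ * q ^ 2 + 2 * α₂ * p ^ 2)| ≤ C * h ^ 3 := by
  set e3 := q * p * (1/4 + β₂/2 - 3*α₂/2) with he3
  set e4 := p^2 * (1/8 - α₂/2 + 3*α₂^2) + q^2 * (-1/8 + β₂^2/2 + α₂/2) with he4
  set e5 := q * p * (-1/8 + β₂/4 + 3*α₂/4 - 2*α₂^2) with he5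
  set e6 := p^2 * (α₂/4 - α₂^2 + 2*α₂^3)
      + q^2 * (1/32 - β₂/8 + β₂^2/8 - α₂/8 + α₂*β₂/4 + α₂^2/8) with he6
  set e7 := q * p * (-α₂/8 + α₂*β₂/4 + α₂^2/2 - α₂^2*β₂/2 - α₂^3/2) with he7
  set e8 := p^2 * (α₂^2/8 - α₂^3/2 + α₂^4/2) with he8
  refine ⟨|e3| + (|e4| + (|e5| + (|e6| + (|e7| + |e8|)))), ?_⟩
  intro h h0 h1
  dsimp only
  have key : (((1 + β₂ * h ^ 2) * q + h * ((1 + α₂ * h ^ 2) * p - (h / 2) * q)) ^ 2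
      + ((1 + α₂ * h ^ 2) ^ 2 * p - (h / 2) * ((1 + α₂ * h ^ 2) * q +
        ((1 + β₂ * h ^ 2) * q + h * ((1 + α₂ * h ^ 2) * p - (h / 2) * q)))) ^ 2) / 2
      - (q ^ 2 + p ^ 2) / 2 - h ^ 2 * (β₂ * q ^ 2 + 2 * α₂ * p ^ 2)
      = h ^ 3 * (e3 + h * (e4 + h * (e5 + h * (e6 + h * (e7 + h * e8))))) := by
    rw [he3, he4, he5, he6, he7, he8]; ring
  rw [key, abs_mul, abs_pow, abs_of_pos h0, mul_comm]
  have h0' := h0.le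
  have hb : |e3 + h * (e4 + h * (e5 + h * (e6 + h * (e7 + h * e8))))|
      ≤ |e3| + (|e4| + (|e5| + (|e6| + (|e7| + |e8|)))) := by
    refine horner_abs _ _ _ _ h0' h1 ?_
    refine horner_abs _ _ _ _ h0' h1 ?_
    refine horner_abs _ _ _ _ h0' h1 ?_
    refine horner_abs _ _ _ _ h0' h1 ?_
    exact horner_abs _ _ _ _ h0' h1 le_rfl
  exact mul_le_mul_of_nonneg_right hb (by positivity)
end

section
/- Let $F : \mathbb{R}^{2d} \to \mathbb{R}^{2d}$ and $R(q,p) = (q,-p)$. Suppose there are constants $C_1, M > 0$ such that (i) for all $z$, $\|F(R(F(z))) - R(z)\| \leq C_1 h^2$, and (ii) for every $k \geq 1$ and all $z, \tilde z$, $\|F^{(k)}(z) - F^{(k)}(\tilde z)\| \leq M \|z - \tilde z\|$, where $F^{(k)}$ denotes the $k$-fold iterate. Then for every $L \geq 1$ and all $z$, writing $z^* = F^{(L)}(z)$, we have $\|F^{(L)}(R(z^*)) - R(z)\| \leq L\, M\, C_1 h^2$. -/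
/-- multi-step approximate reversibility from single-step
reversibility and a uniform Lipschitz bound on the iterates. -/
theorem stmt_18 (d : ℕ) (C₁ M h : ℝ) (hC₁ : 0 < C₁) (hM : 0 < M) (hh : 0 < h)
    (F : EuclideanSpace ℝ (Fin d) × EuclideanSpace ℝ (Fin d) →
         EuclideanSpace ℝ (Fin d) × EuclideanSpace ℝ (Fin d))
    (R : EuclideanSpace ℝ (Fin d) × EuclideanSpace ℝ (Fin d) →
         EuclideanSpace ℝ (Fin d) × EuclideanSpace ℝ (Fin d))
    (hR : ∀ z, R z = (z.1, -z.2))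
    (hsingle : ∀ z, ‖F (R (F z)) - R z‖ ≤ C₁ * h ^ 2)
    (hLip : ∀ k : ℕ, 1 ≤ k → ∀ z z', ‖F^[k] z - F^[k] z'‖ ≤ M * ‖z - z'‖) :
    ∀ L : ℕ, 1 ≤ L → ∀ z,
      ‖F^[L] (R (F^[L] z)) - R z‖ ≤ (L : ℝ) * M * C₁ * h ^ 2 := by
  rcases subsingleton_or_nontrivial
      (EuclideanSpace ℝ (Fin d) × EuclideanSpace ℝ (Fin d)) with hss | hnt
  · intro L hL z
    have : F^[L] (R (F^[L] z)) - R z = 0 := Subsingleton.elim _ _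
    rw [this, norm_zero]
    have : (0:ℝ) < (L:ℝ) * M * C₁ * h ^ 2 := by positivity
    linarith
  · -- norm of R differences
    have hRnorm : ∀ z z' : EuclideanSpace ℝ (Fin d) × EuclideanSpace ℝ (Fin d), ‖R z - R z'‖ = ‖z - z'‖ := by
      intro z z'
      rw [hR, hR]
      simp only [Prod.norm_def, Prod.sub_def]
      congr 1
      rw [show -z.2 - -z'.2 = -(z.2 - z'.2) by abel, norm_neg]
    -- first prove M ≥ 1
    have hM1 : (1:ℝ) ≤ M := by
      by_contra hcon
      push_neg at hcon
      have key : ∀ z z' : EuclideanSpace ℝ (Fin d) × EuclideanSpace ℝ (Fin d), ‖z - z'‖ ≤ M * M * ‖z - z'‖ + 2 * (C₁ * h ^ 2) := by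
        intro z z'
        have h1 := hsingle z
        have h2 := hsingle z'
        have h3 := hLip 1 le_rfl (R (F z)) (R (F z'))
        simp only [Function.iterate_one] at h3
        have h4 := hLip 1 le_rfl z z'
        simp only [Function.iterate_one] at h4
        have h5 : ‖R (F z) - R (F z')‖ = ‖F z - F z'‖ := hRnorm _ _
        calc ‖z - z'‖ = ‖R z - R z'‖ := (hRnorm z z').symm
          _ ≤ ‖R z - F (R (F z))‖ + ‖F (R (F z)) - F (R (F z'))‖
              + ‖F (R (F z')) - R z'‖ := by
                have := norm_sub_le_norm_sub_add_norm_sub (R z) (F (R (F z))) (R z')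
                have := norm_sub_le_norm_sub_add_norm_sub (F (R (F z))) (F (R (F z'))) (R z')
                linarith [norm_sub_le_norm_sub_add_norm_sub (R z) (F (R (F z))) (R z'),
                  norm_sub_le_norm_sub_add_norm_sub (F (R (F z))) (F (R (F z'))) (R z')]
          _ ≤ C₁ * h ^ 2 + M * ‖F z - F z'‖ + C₁ * h ^ 2 := by
                rw [norm_sub_rev (R z)]
                rw [h5] at h3
                linarith
          _ ≤ M * M * ‖z - z'‖ + 2 * (C₁ * h ^ 2) := by nlinarith [norm_nonneg (z - z')]
      obtain ⟨z, z', hzz⟩ := exists_pair_ne (EuclideanSpace ℝ (Fin d) × EuclideanSpace ℝ (Fin d))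
      have hpos : (0:ℝ) < ‖z - z'‖ := by
        rw [norm_pos_iff, sub_ne_zero]; exact hzz
      have hMM : M * M < 1 := by nlinarith
      -- scale z' away from z
      set t : ℝ := (2 * (C₁ * h ^ 2) + 1) / ((1 - M * M) * ‖z - z'‖) with ht
      have htpos : 0 < t := by
        apply div_pos <;> nlinarith
      have := key z (z + t • (z' - z))
      have hnorm : ‖z - (z + t • (z' - z))‖ = t * ‖z - z'‖ := by
        rw [show z - (z + t • (z' - z)) = t • (z - z') by module]
        rw [norm_smul, Real.norm_eq_abs, abs_of_pos htpos]
      rw [hnorm] at this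
      have hteq : t * ((1 - M * M) * ‖z - z'‖) = 2 * (C₁ * h ^ 2) + 1 := by
        rw [ht, div_mul_cancel₀]
        nlinarith
      nlinarith
    intro L hL
    induction L, hL using Nat.le_induction with
    | base =>
      intro z
      simp only [Function.iterate_one, Nat.cast_one, one_mul]
      calc ‖F (R (F z)) - R z‖ ≤ C₁ * h ^ 2 := hsingle z
        _ ≤ M * (C₁ * h ^ 2) := le_mul_of_one_le_left (by positivity) hM1
        _ = M * C₁ * h ^ 2 := by ring
    | succ L hL ih =>
      intro z
      set w := F^[L] z with hw
      have e1 : F^[L + 1] z = F w := by rw [Function.iterate_succ_apply', hw]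
      have e2 : F^[L + 1] (R (F w)) = F^[L] (F (R (F w))) :=
        Function.iterate_succ_apply F L (R (F w))
      rw [e1, e2]
      have hlip := hLip L hL (F (R (F w))) (R w)
      have hs := hsingle w
      have hih := ih z
      calc ‖F^[L] (F (R (F w))) - R z‖
          ≤ ‖F^[L] (F (R (F w))) - F^[L] (R w)‖ + ‖F^[L] (R w) - R z‖ :=
            norm_sub_le_norm_sub_add_norm_sub _ _ _
        _ ≤ M * ‖F (R (F w)) - R w‖ + (L : ℝ) * M * C₁ * h ^ 2 := by
            rw [hw] at *; exact add_le_add hlip hih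
        _ ≤ M * (C₁ * h ^ 2) + (L : ℝ) * M * C₁ * h ^ 2 := by nlinarith
        _ = ((L : ℝ) + 1) * M * C₁ * h ^ 2 := by ring
        _ = ((L + 1 : ℕ) : ℝ) * M * C₁ * h ^ 2 := by push_cast; ring
end
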